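/- (Closed subchain patterns produce Hadamard matrices.) Let H be an N×N complex Hadamard matrix and let R be an N×N real matrix with the following property: for every pair 1 ≤ i < j ≤ N there exists a partition of {1,…,N} into blocks such that for every block S of the partition, ∑_{k∈S} H_{ik}·conj(H_{jk}) = 0 and the value R_{ik} − R_{jk} is constant for k ranging over S. Then H ∘ EXP(i·R) (the entrywise product of H with the matrix of entries exp(i·R_{jk})) is a complex Hadamard matrix. -/

import Mathlib

/-- A complex Hadamard matrix: all entries of modulus one, and `H * Hᴴ = N • 1`. -/
def IsComplexHadamard {n : Type*} [Fintype n] [DecidableEq n] (H : Matrix n n ℂ) : Prop :=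
  (∀ i j, ‖H i j‖ = 1) ∧
    H * H.conjTranspose = (Fintype.card n : ℂ) • (1 : Matrix n n ℂ)

lemma exp_mul_conj_exp (a b : ℝ) :
    Complex.exp (Complex.I * a) * (starRingEnd ℂ) (Complex.exp (Complex.I * b)) =
      Complex.exp (Complex.I * ((a - b : ℝ) : ℂ)) := by
  rw [← Complex.exp_conj, ← Complex.exp_add]
  congr 1
  rw [map_mul, Complex.conj_I, Complex.conj_ofReal]
  push_cast
  ring

/-- closed subchain patterns produce Hadamard matrices:
if for every pair `i < j` there is a partition of the index set into blocks on each of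
which `∑_{k∈S} H_ik · conj(H_jk) = 0` (the block is closed) and `R_ik − R_jk` is
constant, then `H ∘ EXP(i·R)` is a complex Hadamard matrix. -/
theorem closed_subchain_pattern_hadamard (N : ℕ)
    (H : Matrix (Fin N) (Fin N) ℂ) (hH : IsComplexHadamard H)
    (R : Matrix (Fin N) (Fin N) ℝ)
    (hpat : ∀ i j : Fin N, i < j →
      ∃ P : Finpartition (Finset.univ : Finset (Fin N)),
        ∀ S ∈ P.parts,
          (∑ k ∈ S, H i k * (starRingEnd ℂ) (H j k) = 0) ∧
          (∀ k ∈ S, ∀ l ∈ S, R i k - R j k = R i l - R j l)) :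
    IsComplexHadamard
      (Matrix.of fun i j => H i j * Complex.exp (Complex.I * ((R i j : ℝ) : ℂ))) := by
  obtain ⟨habs, horth⟩ := hH
  set M : Matrix (Fin N) (Fin N) ℂ :=
    Matrix.of fun i j => H i j * Complex.exp (Complex.I * ((R i j : ℝ) : ℂ)) with hM
  have hMentry : ∀ i j, M i j = H i j * Complex.exp (Complex.I * ((R i j : ℝ) : ℂ)) :=
    fun i j => rfl
  have hterm : ∀ i j k : Fin N,
      M i k * (starRingEnd ℂ) (M j k) =
        (H i k * (starRingEnd ℂ) (H j k)) * Complex.exp (Complex.I * ((R i k - R j k : ℝ) : ℂ)) := by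
    intro i j k
    rw [hMentry, hMentry, map_mul, ← exp_mul_conj_exp (R i k) (R j k)]
    ring
  have key : ∀ i j : Fin N, i < j → ∑ k, M i k * (starRingEnd ℂ) (M j k) = 0 := by
    intro i j hij
    obtain ⟨P, hP⟩ := hpat i j hij
    rw [show (Finset.univ : Finset (Fin N)) = P.parts.biUnion id from P.biUnion_parts.symm,
      Finset.sum_biUnion (P.supIndep.pairwiseDisjoint)]
    refine Finset.sum_eq_zero fun S hS => ?_
    simp only [id]
    rcases S.eq_empty_or_nonempty with h | ⟨k0, hk0⟩
    · simp [h]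
    · obtain ⟨hzero, hconst⟩ := hP S hS
      have : ∀ k ∈ S, M i k * (starRingEnd ℂ) (M j k) =
          (H i k * (starRingEnd ℂ) (H j k)) *
            Complex.exp (Complex.I * ((R i k0 - R j k0 : ℝ) : ℂ)) := by
        intro k hk
        rw [hterm, hconst k hk k0 hk0]
      rw [Finset.sum_congr rfl this, ← Finset.sum_mul, hzero, zero_mul]
  have key2 : ∀ i j : Fin N, i ≠ j → ∑ k, M i k * (starRingEnd ℂ) (M j k) = 0 := by
    intro i j hij
    rcases lt_or_gt_of_ne hij with h | h
    · exact key i j h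
    · have := key j i h
      have hstar : ∑ k, M i k * (starRingEnd ℂ) (M j k) =
          (starRingEnd ℂ) (∑ k, M j k * (starRingEnd ℂ) (M i k)) := by
        rw [map_sum]
        refine Finset.sum_congr rfl fun k _ => ?_
        rw [map_mul, Complex.conj_conj]
        ring
      rw [hstar, this, map_zero]
  constructor
  · intro i j
    rw [hMentry, norm_mul, habs, one_mul, Complex.norm_exp]
    have : (Complex.I * ((R i j : ℝ) : ℂ)).re = 0 := by simp
    rw [this, Real.exp_zero]
  · ext i j
    rw [Matrix.mul_apply, Matrix.smul_apply, Matrix.one_apply]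
    by_cases hij : i = j
    · subst hij
      have : ∀ k : Fin N, M i k * (M.conjTranspose) k i = H i k * (starRingEnd ℂ) (H i k) := by
        intro k
        rw [Matrix.conjTranspose_apply]
        show M i k * (starRingEnd ℂ) (M i k) = _
        rw [hterm, sub_self]
        push_cast
        rw [mul_zero, Complex.exp_zero, mul_one]
      rw [Finset.sum_congr rfl fun k _ => this k]
      have := congrFun (congrFun horth i) i
      rw [Matrix.mul_apply, Matrix.smul_apply, Matrix.one_apply_eq] at this
      simp only [Matrix.conjTranspose_apply] at this
      simpa using this
    · simp only [if_neg hij, smul_zero]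
      have := key2 i j hij
      simpa [Matrix.conjTranspose_apply] using this
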